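/- Let u : ℤ₂ → ℤ₂ be a 1-Lipschitz transitive map and let g : ℤ₂ → ℤ₂ be a derivative of u modulo 4 with parameter K. Let v : ℤ₂ → ℤ₂ be an arbitrary 1-Lipschitz map, and define f : ℤ₂ → ℤ₂ by f(x) = u(x) + 4·v(x). Then g is a derivative of f modulo 4 with parameter K (so f is uniformly differentiable modulo 4), and f is transitive, i.e. transitive modulo 2^n for every n ≥ 1. -/

import Mathlib

open Function Finset

/-- `a ≡ b (mod 2^s)` in the 2-adic integers. -/
def CongMod (s : ℕ) (a b : ℤ_[2]) : Prop := ‖a - b‖ ≤ ((2 : ℝ) ^ s)⁻¹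

/-- `f` is 1-Lipschitz for the 2-adic norm (a T-function). -/
def OneLip (f : ℤ_[2] → ℤ_[2]) : Prop := ∀ a b : ℤ_[2], ‖f a - f b‖ ≤ ‖a - b‖

/-- `f` is transitive modulo `2^n`. -/
def TransMod (f : ℤ_[2] → ℤ_[2]) (n : ℕ) : Prop :=
  ∀ x y : ℤ_[2], ∃ i < 2 ^ n, CongMod n (f^[i] x) y

/-- `f` is transitive (single cycle modulo every power of 2). -/
def TransitiveT (f : ℤ_[2] → ℤ_[2]) : Prop := ∀ n : ℕ, 1 ≤ n → TransMod f n

/-- `f` is bijective modulo `2^n`. -/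
def BijMod (f : ℤ_[2] → ℤ_[2]) (n : ℕ) : Prop :=
  (∀ a b : ℤ_[2], CongMod n (f a) (f b) → CongMod n a b) ∧
  (∀ y : ℤ_[2], ∃ x : ℤ_[2], CongMod n (f x) y)

/-- `f` is bijective (measure-preserving T-function). -/
def BijectiveT (f : ℤ_[2] → ℤ_[2]) : Prop := ∀ n : ℕ, 1 ≤ n → BijMod f n

/-- `g` is a derivative of `f` modulo `2^M` with parameter `K`. -/
def IsDerivMod (f g : ℤ_[2] → ℤ_[2]) (M K : ℕ) : Prop :=
  ∀ x h : ℤ_[2], ‖h‖ ≤ ((2 : ℝ) ^ K)⁻¹ →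
    ‖f (x + h) - f x - g x * h‖ ≤ ((2 : ℝ) ^ M)⁻¹ * ‖h‖

/-- The `n`-th binary digit of a 2-adic integer, as an element of `ZMod 2`.
`PadicInt.appr x n` is the unique integer in `{0, …, 2^n - 1}` congruent to `x` mod `2^n`. -/
noncomputable def delta (n : ℕ) (x : ℤ_[2]) : ZMod 2 :=
  (((x.appr (n + 1) - x.appr n) / 2 ^ n : ℕ) : ZMod 2)

/-!
Modulo 4 the perturbation `4 v` is invisible, which gives the derivative and the transitivity
modulo 2. A 1-Lipschitz map transitive modulo `2^n` is transitive modulo `2^(n+1)` as soon as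
`f^[2^n] x ≡ x + 2^n (mod 2^(n+1))` for all `x`; for `u` this holds because `u` induces a single
cycle modulo `2^n` and modulo `2^(n+1)`. For `f`, telescope `f^[2^n] x - x` into the sum of
`u t - t` and of `4 v t` over the `f`-orbit `t` of `x`. Modulo `2^(n+1)`, `u t - t` depends only on
`t` modulo `2^n`, and the `f`-orbit runs through every residue modulo `2^n`, so the first sum equals
the same sum along the `u`-orbit, that is `u^[2^n] x - x ≡ 2^n`. The sum of the 1-Lipschitz `v`
over all residues modulo `2^n` is divisible by `2^(n-1)` (pair `k` with `k + 2^(n-1)`), so the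
second sum vanishes modulo `2^(n+1)`.
-/

open PadicInt

section SingleOrbit

variable {α : Type*} [Fintype α] {σ : α → α} {N : ℕ}

theorem injective_of_surjective_orbit (hσ : ∀ c, Surjective fun i : Fin N => σ^[i] c) :
    Injective σ := by
  refine Finite.injective_iff_surjective.2 fun y => ?_
  obtain ⟨i, hi⟩ := hσ (σ y) y
  exact ⟨σ^[i] y, by rwa [← iterate_succ_apply' σ i y, iterate_succ_apply]⟩

theorem iterate_ne_self_of_surjective_orbit (hN : Fintype.card α = N)
    (hσ : ∀ c, Surjective fun i : Fin N => σ^[i] c) (c : α) {i : ℕ} (hi : 0 < i) (hiN : i < N) :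
    σ^[i] c ≠ c := by
  intro h
  have hbij : Bijective fun i : Fin N => σ^[i] c :=
    (Fintype.bijective_iff_surjective_and_card _).2 ⟨hσ c, by simp [hN]⟩
  have := Fin.mk.inj (@hbij.1 ⟨i, hiN⟩ ⟨0, hi.trans hiN⟩ h)
  omega

theorem iterate_card_of_surjective_orbit (hN : Fintype.card α = N)
    (hσ : ∀ c, Surjective fun i : Fin N => σ^[i] c) (c : α) : σ^[N] c = c := by
  obtain ⟨⟨j, hjN⟩, hj⟩ := hσ c (σ^[N] c)
  obtain rfl | hj0 := j.eq_zero_or_pos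
  · exact hj.symm
  have hback : σ^[N - j] c = c := by
    refine (injective_of_surjective_orbit hσ).iterate j ?_
    rw [← iterate_add_apply, Nat.add_sub_cancel' hjN.le, ← hj]
  exact (iterate_ne_self_of_surjective_orbit hN hσ c (by omega) (by omega) hback).elim

end SingleOrbit

section Congruences

variable {m n : ℕ} {a b : ℤ_[2]}

theorem norm_le_inv_two_pow_iff : ‖a‖ ≤ ((2 : ℝ) ^ m)⁻¹ ↔ toZModPow m a = 0 := by
  rw [← RingHom.mem_ker, ker_toZModPow, ← norm_le_pow_iff_mem_span_pow]
  push_cast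
  rw [zpow_neg, zpow_natCast]

theorem congMod_iff_toZModPow : CongMod m a b ↔ toZModPow m a = toZModPow m b := by
  rw [CongMod, norm_le_inv_two_pow_iff, map_sub, sub_eq_zero]

theorem CongMod.trans {c : ℤ_[2]} (hab : CongMod m a b) (hbc : CongMod m b c) : CongMod m a c :=
  congMod_iff_toZModPow.2 ((congMod_iff_toZModPow.1 hab).trans (congMod_iff_toZModPow.1 hbc))

theorem CongMod.mono (h : CongMod n a b) (hmn : m ≤ n) : CongMod m a b :=
  le_trans h (inv_anti₀ (by positivity) (pow_le_pow_right₀ one_le_two hmn))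

theorem toZModPow_natCast_val (c : ZMod (2 ^ m)) : toZModPow m (c.val : ℤ_[2]) = c := by
  rw [map_natCast, ZMod.natCast_zmod_val]

theorem norm_two_pow (n : ℕ) : ‖(2 : ℤ_[2]) ^ n‖ = ((2 : ℝ) ^ n)⁻¹ := by
  simpa using norm_p_pow (p := 2) n

theorem norm_two_pow_mul_le_iff : ‖(2 : ℤ_[2]) ^ n * a‖ ≤ ((2 : ℝ) ^ (n + m))⁻¹ ↔
    ‖a‖ ≤ ((2 : ℝ) ^ m)⁻¹ := by
  rw [norm_mul, norm_two_pow, pow_add, _root_.mul_inv, mul_le_mul_iff_of_pos_left (by positivity)]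

theorem congMod_add_two_pow_of_not_congMod_succ (h : CongMod n a b)
    (h' : ¬ CongMod (n + 1) a b) : CongMod (n + 1) a (b + 2 ^ n) := by
  obtain ⟨c, hc⟩ : (2 : ℤ_[2]) ^ n ∣ a - b := by
    have := norm_le_pow_iff_mem_span_pow (p := 2) (a - b) n
    push_cast at this
    rw [zpow_neg, zpow_natCast, Ideal.mem_span_singleton] at this
    exact this.1 h
  rw [CongMod, hc, norm_two_pow_mul_le_iff, ← sub_zero c, ← CongMod] at h'
  rw [CongMod, show a - (b + 2 ^ n) = 2 ^ n * (c - 1) by linear_combination hc,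
    norm_two_pow_mul_le_iff, ← CongMod]
  rw [congMod_iff_toZModPow] at h' ⊢
  revert h'
  simp only [map_zero, map_one]
  generalize toZModPow 1 c = z
  decide +revert

end Congruences

section ResidueDynamics

variable {F : ℤ_[2] → ℤ_[2]} {m n : ℕ}

theorem OneLip.congMod (hF : OneLip F) {a b : ℤ_[2]} (h : CongMod m a b) :
    CongMod m (F a) (F b) :=
  le_trans (hF a b) h

noncomputable def residueMap (F : ℤ_[2] → ℤ_[2]) (m : ℕ) (c : ZMod (2 ^ m)) : ZMod (2 ^ m) :=
  toZModPow m (F c.val)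

theorem OneLip.toZModPow_iterate (hF : OneLip F) (i : ℕ) (a : ℤ_[2]) :
    toZModPow m (F^[i] a) = (residueMap F m)^[i] (toZModPow m a) := by
  induction i with
  | zero => rfl
  | succ i ih =>
    rw [iterate_succ_apply', iterate_succ_apply', ← ih, residueMap, ← congMod_iff_toZModPow]
    exact hF.congMod (congMod_iff_toZModPow.2 (toZModPow_natCast_val _).symm)

theorem OneLip.toZModPow_apply (hF : OneLip F) (a : ℤ_[2]) :
    toZModPow m (F a) = residueMap F m (toZModPow m a) :=
  hF.toZModPow_iterate 1 a

theorem TransMod.surjective_orbit (hT : TransMod F m) (hF : OneLip F) (c : ZMod (2 ^ m)) :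
    Surjective fun i : Fin (2 ^ m) => (residueMap F m)^[i] c := by
  intro y
  obtain ⟨i, hi, hxy⟩ := hT (c.val : ℤ_[2]) (y.val : ℤ_[2])
  refine ⟨⟨i, hi⟩, ?_⟩
  rwa [congMod_iff_toZModPow, hF.toZModPow_iterate, toZModPow_natCast_val,
    toZModPow_natCast_val] at hxy

theorem TransMod.congMod_of_congMod_apply (hT : TransMod F m) (hF : OneLip F) {a b : ℤ_[2]}
    (h : CongMod m (F a) (F b)) : CongMod m a b := by
  rw [congMod_iff_toZModPow, hF.toZModPow_apply, hF.toZModPow_apply] at h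
  exact congMod_iff_toZModPow.2 (injective_of_surjective_orbit (hT.surjective_orbit hF) h)

theorem TransMod.iterate_two_pow_congMod (hT : TransMod F m) (hF : OneLip F) (x : ℤ_[2]) :
    CongMod m (F^[2 ^ m] x) x := by
  rw [congMod_iff_toZModPow, hF.toZModPow_iterate]
  exact iterate_card_of_surjective_orbit (ZMod.card _) (hT.surjective_orbit hF) _

theorem TransMod.not_congMod_iterate (hT : TransMod F m) (hF : OneLip F) (x : ℤ_[2]) {i : ℕ}
    (hi : 0 < i) (him : i < 2 ^ m) : ¬ CongMod m (F^[i] x) x := by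
  rw [congMod_iff_toZModPow, hF.toZModPow_iterate]
  exact iterate_ne_self_of_surjective_orbit (ZMod.card _) (hT.surjective_orbit hF) _ hi him

theorem TransMod.sum_orbit_eq_sum_range (hT : TransMod F m) (hF : OneLip F) {A : Type*}
    [AddCommMonoid A] {w : ℤ_[2] → A} (hw : ∀ a b, CongMod m a b → w a = w b) (x : ℤ_[2]) :
    ∑ i ∈ range (2 ^ m), w (F^[i] x) = ∑ k ∈ range (2 ^ m), w k := by
  have hval (a : ℤ_[2]) : w a = w (toZModPow m a).val :=
    hw _ _ (congMod_iff_toZModPow.2 (toZModPow_natCast_val _).symm)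
  have horbit : Bijective fun i : Fin (2 ^ m) => (residueMap F m)^[i] (toZModPow m x) :=
    (Fintype.bijective_iff_surjective_and_card _).2 ⟨hT.surjective_orbit hF _, by simp⟩
  have hrepr : Bijective fun c : ZMod (2 ^ m) => (⟨c.val, c.val_lt⟩ : Fin (2 ^ m)) :=
    (Fintype.bijective_iff_injective_and_card _).2
      ⟨fun c d h => ZMod.val_injective _ (Fin.mk.inj h), by simp⟩
  rw [← Fin.sum_univ_eq_sum_range (fun i => w (F^[i] x)),
    ← Fin.sum_univ_eq_sum_range (fun k => w k)]
  calc ∑ i : Fin (2 ^ m), w (F^[i] x) = ∑ c : ZMod (2 ^ m), w c.val :=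
        Fintype.sum_bijective _ horbit _ _ fun i => by rw [hval, hF.toZModPow_iterate]
    _ = ∑ k : Fin (2 ^ m), w k := Fintype.sum_bijective _ hrepr _ _ fun c => rfl

theorem TransMod.iterate_two_pow_congMod_add (hT : TransMod F n) (hT' : TransMod F (n + 1))
    (hF : OneLip F) (x : ℤ_[2]) : CongMod (n + 1) (F^[2 ^ n] x) (x + 2 ^ n) :=
  congMod_add_two_pow_of_not_congMod_succ (hT.iterate_two_pow_congMod hF x)
    (hT'.not_congMod_iterate hF x (by positivity) (Nat.pow_lt_pow_right one_lt_two n.lt_succ_self))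

theorem TransMod.congMod_succ_apply_sub_self (hT : TransMod F (n + 1)) (hF : OneLip F)
    {a b : ℤ_[2]} (h : CongMod n a b) : CongMod (n + 1) (F a - a) (F b - b) := by
  by_cases hab : CongMod (n + 1) a b
  · have hFab := hF.congMod hab
    rw [congMod_iff_toZModPow] at hab hFab ⊢
    rw [map_sub, map_sub, hab, hFab]
  · have hFab := congMod_add_two_pow_of_not_congMod_succ (hF.congMod h)
      (mt (hT.congMod_of_congMod_apply hF) hab)
    have hab' := congMod_add_two_pow_of_not_congMod_succ h hab
    rw [congMod_iff_toZModPow] at hFab hab' ⊢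
    rw [map_add] at hFab hab'
    rw [map_sub, map_sub]
    linear_combination hFab - hab'

theorem TransMod.succ_of_iterate_two_pow (hT : TransMod F n)
    (hlift : ∀ x, CongMod (n + 1) (F^[2 ^ n] x) (x + 2 ^ n)) : TransMod F (n + 1) := by
  intro x y
  obtain ⟨i, hi, hxy⟩ := hT x y
  by_cases h : CongMod (n + 1) (F^[i] x) y
  · exact ⟨i, hi.trans (Nat.pow_lt_pow_right one_lt_two n.lt_succ_self), h⟩
  refine ⟨2 ^ n + i, by rw [pow_succ]; omega, ?_⟩
  have hy := congMod_add_two_pow_of_not_congMod_succ hxy h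
  have hstep := hlift (F^[i] x)
  have hzero : (2 : ZMod (2 ^ (n + 1))) ^ (n + 1) = 0 := by
    exact_mod_cast ZMod.natCast_self (2 ^ (n + 1))
  rw [congMod_iff_toZModPow] at hy hstep ⊢
  rw [map_add, map_pow, map_ofNat] at hy hstep
  rw [iterate_add_apply]
  linear_combination hstep + hy + hzero

end ResidueDynamics

theorem iterate_sub_eq_sum_range {G : Type*} [AddCommGroup G] (F : G → G) (N : ℕ) (x : G) :
    F^[N] x - x = ∑ i ∈ range N, (F (F^[i] x) - F^[i] x) := by
  simpa only [iterate_succ_apply', iterate_zero_apply] using (sum_range_sub (F^[·] x) N).symm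

section Perturbation

variable {u v f : ℤ_[2] → ℤ_[2]}

theorem OneLip.add_mul (hu : OneLip u) (hv : OneLip v) (c : ℤ_[2]) :
    OneLip fun x => u x + c * v x := by
  intro a b
  rw [show u a + c * v a - (u b + c * v b) = (u a - u b) + c * (v a - v b) by ring]
  refine (PadicInt.nonarchimedean _ _).trans (max_le (hu a b) ?_)
  rw [norm_mul]
  exact (mul_le_of_le_one_left (norm_nonneg _) (norm_le_one c)).trans (hv a b)

theorem IsDerivMod.add_two_pow_mul {g : ℤ_[2] → ℤ_[2]} {M K : ℕ} (hg : IsDerivMod u g M K)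
    (hv : OneLip v) (hf : ∀ x, f x = u x + 2 ^ M * v x) : IsDerivMod f g M K := by
  intro x h hh
  rw [hf, hf, show u (x + h) + 2 ^ M * v (x + h) - (u x + 2 ^ M * v x) - g x * h =
    (u (x + h) - u x - g x * h) + 2 ^ M * (v (x + h) - v x) by ring]
  refine (PadicInt.nonarchimedean _ _).trans (max_le (hg x h hh) ?_)
  rw [norm_mul, norm_two_pow]
  exact mul_le_mul_of_nonneg_left (by simpa using hv (x + h) x) (by positivity)

theorem TransMod.of_congMod {n : ℕ} (hT : TransMod u n) (hu : OneLip u)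
    (hfu : ∀ x, CongMod n (f x) (u x)) : TransMod f n := by
  have hiter (i : ℕ) (x : ℤ_[2]) : CongMod n (f^[i] x) (u^[i] x) := by
    induction i with
    | zero => simp [CongMod]
    | succ i ih =>
      rw [iterate_succ_apply', iterate_succ_apply']
      exact (hfu _).trans (hu.congMod ih)
  intro x y
  obtain ⟨i, hi, hxy⟩ := hT x y
  exact ⟨i, hi, (hiter i x).trans hxy⟩

theorem OneLip.norm_sum_range_two_pow_le (hv : OneLip v) (m : ℕ) :
    ‖∑ k ∈ range (2 ^ (m + 1)), v k‖ ≤ ((2 : ℝ) ^ m)⁻¹ := by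
  induction m with
  | zero => simpa using norm_le_one _
  | succ m ih =>
    set S := ∑ k ∈ range (2 ^ (m + 1)), v k
    have hsplit : ∑ k ∈ range (2 ^ (m + 2)), v k =
        2 ^ 1 * S + ∑ k ∈ range (2 ^ (m + 1)), (v ↑(2 ^ (m + 1) + k) - v k) := by
      rw [pow_succ 2 (m + 1), mul_two, sum_range_add, sum_sub_distrib]
      ring
    have hdiff : ‖∑ k ∈ range (2 ^ (m + 1)), (v ↑(2 ^ (m + 1) + k) - v k)‖ ≤
        ((2 : ℝ) ^ (m + 1))⁻¹ := by
      refine IsUltrametricDist.norm_sum_le_of_forall_le_of_nonneg (by positivity) fun k _ => ?_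
      refine (hv _ _).trans (le_of_eq ?_)
      rw [Nat.cast_add, add_sub_cancel_right, Nat.cast_pow, Nat.cast_ofNat, norm_two_pow]
    rw [hsplit]
    refine (PadicInt.nonarchimedean _ _).trans (max_le ?_ hdiff)
    rwa [add_comm m 1, norm_two_pow_mul_le_iff]

theorem TransMod.norm_sum_orbit_le {m : ℕ} (hfm : TransMod f (m + 1)) (hf : OneLip f)
    (hv : OneLip v) (x : ℤ_[2]) : ‖∑ i ∈ range (2 ^ (m + 1)), v (f^[i] x)‖ ≤ ((2 : ℝ) ^ m)⁻¹ := by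
  have hres : CongMod m (∑ i ∈ range (2 ^ (m + 1)), v (f^[i] x))
      (∑ k ∈ range (2 ^ (m + 1)), v k) := by
    refine CongMod.mono ?_ m.le_succ
    rw [congMod_iff_toZModPow, map_sum, map_sum]
    exact hfm.sum_orbit_eq_sum_range hf (fun a b h => congMod_iff_toZModPow.1 (hv.congMod h)) x
  rw [← sub_add_cancel (∑ i ∈ range (2 ^ (m + 1)), v (f^[i] x)) (∑ k ∈ range (2 ^ (m + 1)), v k)]
  exact (PadicInt.nonarchimedean _ _).trans (max_le hres (hv.norm_sum_range_two_pow_le m))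

theorem iterate_two_pow_congMod_of_perturb {m : ℕ} (hu : OneLip u) (hv : OneLip v) (hf : OneLip f)
    (hfdef : ∀ x, f x = u x + 4 * v x) (hum : TransMod u (m + 1)) (hum' : TransMod u (m + 2))
    (hfm : TransMod f (m + 1)) (x : ℤ_[2]) :
    CongMod (m + 2) (f^[2 ^ (m + 1)] x) (x + 2 ^ (m + 1)) := by
  have htel : f^[2 ^ (m + 1)] x - x = ∑ i ∈ range (2 ^ (m + 1)), (u (f^[i] x) - f^[i] x) +
      4 * ∑ i ∈ range (2 ^ (m + 1)), v (f^[i] x) := by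
    rw [iterate_sub_eq_sum_range, mul_sum, ← sum_add_distrib]
    refine sum_congr rfl fun i _ => ?_
    rw [hfdef]
    ring
  have hdrift : ∑ i ∈ range (2 ^ (m + 1)), toZModPow (m + 2) (u (f^[i] x) - f^[i] x) =
      toZModPow (m + 2) (u^[2 ^ (m + 1)] x - x) := by
    have hw (a b : ℤ_[2]) (h : CongMod (m + 1) a b) :
        toZModPow (m + 2) (u a - a) = toZModPow (m + 2) (u b - b) :=
      congMod_iff_toZModPow.1 (hum'.congMod_succ_apply_sub_self hu h)
    rw [hfm.sum_orbit_eq_sum_range hf hw, ← hum.sum_orbit_eq_sum_range hu hw x,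
      iterate_sub_eq_sum_range, map_sum]
  have hsmall : ‖4 * ∑ i ∈ range (2 ^ (m + 1)), v (f^[i] x)‖ ≤ ((2 : ℝ) ^ (m + 2))⁻¹ := by
    rw [show (4 : ℤ_[2]) = 2 ^ 2 by norm_num, add_comm m 2, norm_two_pow_mul_le_iff]
    exact hfm.norm_sum_orbit_le hf hv x
  have hulift := hum.iterate_two_pow_congMod_add hum' hu x
  have hflift := congrArg (toZModPow (m + 2)) htel
  rw [map_add, map_sum, hdrift, norm_le_inv_two_pow_iff.1 hsmall, add_zero, map_sub, map_sub]
    at hflift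
  rw [congMod_iff_toZModPow] at hulift ⊢
  linear_combination hflift + hulift

end Perturbation

/-- Perturbing a transitive T-function uniformly differentiable modulo 4 by `4 v(x)`
keeps the derivative modulo 4 and preserves transitivity. -/
theorem perturbation_preserves (u g v : ℤ_[2] → ℤ_[2]) (K : ℕ)
    (hu : OneLip u) (hut : TransitiveT u) (hg : IsDerivMod u g 2 K)
    (hv : OneLip v) (f : ℤ_[2] → ℤ_[2]) (hfdef : ∀ x : ℤ_[2], f x = u x + 4 * v x) :
    IsDerivMod f g 2 K ∧ TransitiveT f := by
  have hf : OneLip f := funext hfdef ▸ hu.add_mul hv 4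
  refine ⟨hg.add_two_pow_mul hv fun x => by rw [hfdef]; norm_num, fun n hn => ?_⟩
  induction n, hn using Nat.le_induction with
  | base =>
    refine (hut 1 le_rfl).of_congMod hu fun x => CongMod.mono ?_ one_le_two
    rw [CongMod, hfdef, add_sub_cancel_left, show (4 : ℤ_[2]) = 2 ^ 2 by norm_num]
    exact (norm_two_pow_mul_le_iff (m := 0)).2 (by simpa using norm_le_one _)
  | succ n hn ih =>
    obtain ⟨m, rfl⟩ := Nat.exists_eq_add_of_le' hn
    exact ih.succ_of_iterate_two_pow
      (iterate_two_pow_congMod_of_perturb hu hv hf hfdef (hut _ hn) (hut _ (by omega)) ih)
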